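/- Let D = {(0, +1, +1)} be the singleton set consisting of the pattern 0++. Then cap(D) = log₂((√5 + 1)/2), the base-2 logarithm of the golden ratio. -/

import Mathlib

/-- The integer value of a binary symbol. -/
def boolToInt (b : Bool) : ℤ := if b then 1 else 0

/-- Componentwise difference of two binary words, a word over `{-1, 0, +1}`. -/
def diffWord (u v : List Bool) : List ℤ :=
  List.zipWith (fun a b => boolToInt a - boolToInt b) u v

/-- A forbidden pattern: a nonempty finite word over the alphabet `{-1, 0, +1}`. -/
def IsPattern (p : List ℤ) : Prop :=
  p ≠ [] ∧ ∀ x ∈ p, x = -1 ∨ x = 0 ∨ x = 1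

/-- A code `C` of binary words avoids the forbidden set `D` if no difference of two
distinct code words contains a pattern of `D` as a contiguous subword (factor). -/
def AvoidsCode (D : Finset (List ℤ)) (C : Finset (List Bool)) : Prop :=
  ∀ u ∈ C, ∀ v ∈ C, u ≠ v → ∀ p ∈ D, ¬ p <:+: diffWord u v

/-- `delta D n` : the maximal cardinality of a code of binary words of length `n`
avoiding the forbidden set `D`. -/
noncomputable def delta (D : Finset (List ℤ)) (n : ℕ) : ℕ :=
  sSup {k : ℕ | ∃ C : Finset (List Bool),
    (∀ u ∈ C, u.length = n) ∧ AvoidsCode D C ∧ C.card = k}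

/-- The capacity of a set of forbidden difference patterns. -/
noncomputable def cap (D : Finset (List ℤ)) : ℝ :=
  Filter.limsup (fun n : ℕ => Real.logb 2 (delta D n) / n) Filter.atTop


/-!
Words with no two adjacent ones form a code avoiding `0++` (a `+` in `u - v` needs a one in `u`),
of size `fib (n + 2)`. Conversely, strip the first letter of a code avoiding `0++`: each of the two
left quotients avoids `0++` even after a leading `0`. Such a code cannot contain words starting
with `00` and with `11`, since their difference starts with `++`; so removing one letter on one
branch and two letters on the other gives the Fibonacci bound `fib (n + 2)`, and the original
code has at most `2 fib (n + 1) ≤ fib (n + 3)` words. As `fib (n + 2)` grows like `φ ^ n`, the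
capacity is `log₂ φ`.
-/

open Finset Filter Topology Real goldenRatio

lemma diffWord_cons (a b : Bool) (u v : List Bool) :
    diffWord (a :: u) (b :: v) = (boolToInt a - boolToInt b) :: diffWord u v := rfl

lemma diffWord_cons_self (b : Bool) (u v : List Bool) :
    diffWord (b :: u) (b :: v) = 0 :: diffWord u v := by
  simp [diffWord_cons]

lemma card_le_one_of_length_eq_zero {C : Finset (List Bool)} (hC : ∀ u ∈ C, u.length = 0) :
    C.card ≤ 1 :=
  Finset.card_le_one.mpr fun u hu v hv => by
    rw [List.eq_nil_of_length_eq_zero (hC u hu), List.eq_nil_of_length_eq_zero (hC v hv)]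

section LeftQuotient

variable {α : Type*}

noncomputable def Finset.leftQuotient (C : Finset (List α)) (a : α) : Finset (List α) :=
  C.preimage (List.cons a) List.cons_injective.injOn

@[simp]
lemma Finset.mem_leftQuotient {C : Finset (List α)} {a : α} {w : List α} :
    w ∈ C.leftQuotient a ↔ a :: w ∈ C :=
  Finset.mem_preimage

lemma length_of_mem_leftQuotient {C : Finset (List α)} {a : α} {n : ℕ}
    (hC : ∀ u ∈ C, u.length = n + 1) {w : List α} (hw : w ∈ C.leftQuotient a) :
    w.length = n := by
  simpa using hC _ (mem_leftQuotient.mp hw)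

end LeftQuotient

lemma card_le_card_leftQuotient_add_card_leftQuotient {C : Finset (List Bool)} {n : ℕ}
    (hC : ∀ u ∈ C, u.length = n + 1) (b : Bool) :
    C.card ≤ (C.leftQuotient b).card + (C.leftQuotient !b).card := by
  have hsub :
      C ⊆ (C.leftQuotient b).image (b :: ·) ∪ (C.leftQuotient !b).image ((!b) :: ·) := by
    intro u hu
    match u, hu with
    | [], hu => simpa using hC _ hu
    | c :: w, hu => cases b <;> cases c <;> simp [hu]
  calc C.card ≤ _ := card_le_card hsub
    _ ≤ _ := card_union_le _ _
    _ ≤ _ := add_le_add card_image_le card_image_le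

lemma card_le_two_pow :
    ∀ {n : ℕ} {C : Finset (List Bool)}, (∀ u ∈ C, u.length = n) → C.card ≤ 2 ^ n
  | 0, _, hC => card_le_one_of_length_eq_zero hC
  | n + 1, C, hC => by
    calc C.card ≤ (C.leftQuotient false).card + (C.leftQuotient true).card :=
          card_le_card_leftQuotient_add_card_leftQuotient hC false
      _ ≤ 2 ^ n + 2 ^ n :=
          add_le_add (card_le_two_pow fun _ => length_of_mem_leftQuotient hC)
            (card_le_two_pow fun _ => length_of_mem_leftQuotient hC)
      _ = 2 ^ (n + 1) := by ring

/-- `C` still avoids `0++` after a common letter is prepended to all its words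
(see `diffWord_cons_self`); this is what the left quotients of a code avoiding `0++` satisfy. -/
def AvoidsAfterZero (C : Finset (List Bool)) : Prop :=
  ∀ u ∈ C, ∀ v ∈ C, u ≠ v → ¬ [(0 : ℤ), 1, 1] <:+: 0 :: diffWord u v

lemma AvoidsCode.avoidsAfterZero_leftQuotient {C : Finset (List Bool)}
    (hC : AvoidsCode {[0, 1, 1]} C) (b : Bool) : AvoidsAfterZero (C.leftQuotient b) := by
  intro u hu v hv huv
  rw [← diffWord_cons_self b]
  exact hC _ (mem_leftQuotient.mp hu) _ (mem_leftQuotient.mp hv) (by simpa using huv) _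
    (mem_singleton_self _)

lemma AvoidsAfterZero.avoidsCode {C : Finset (List Bool)} (hC : AvoidsAfterZero C) :
    AvoidsCode {[0, 1, 1]} C := by
  intro u hu v hv huv p hp hinfix
  rw [mem_singleton] at hp
  subst hp
  exact hC u hu v hv huv (List.infix_cons hinfix)

lemma AvoidsAfterZero.leftQuotient {C : Finset (List Bool)} (hC : AvoidsAfterZero C) (b : Bool) :
    AvoidsAfterZero (C.leftQuotient b) :=
  hC.avoidsCode.avoidsAfterZero_leftQuotient b

/-- Words starting with `11` and `00` differ by `++ …`, which the leading `0` turns into `0++`. -/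
lemma AvoidsAfterZero.exists_leftQuotient_leftQuotient_eq_empty {C : Finset (List Bool)}
    (hC : AvoidsAfterZero C) : ∃ b, (C.leftQuotient b).leftQuotient b = ∅ := by
  by_contra! h
  obtain ⟨z₁, hz₁⟩ := h true
  obtain ⟨z₀, hz₀⟩ := h false
  simp only [mem_leftQuotient] at hz₁ hz₀
  refine hC _ hz₁ _ hz₀ (by simp) (List.IsPrefix.isInfix ?_)
  simp [diffWord_cons, boolToInt]

lemma AvoidsAfterZero.card_le_fib {n : ℕ} {C : Finset (List Bool)} (hC : AvoidsAfterZero C)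
    (hlen : ∀ u ∈ C, u.length = n) : C.card ≤ Nat.fib (n + 2) := by
  induction n using Nat.strong_induction_on generalizing C with
  | _ n ih =>
  match n, hlen with
  | 0, hlen => exact (card_le_two_pow hlen).trans (by decide)
  | 1, hlen => exact (card_le_two_pow hlen).trans (by decide)
  | n + 2, hlen =>
    obtain ⟨b, hb⟩ := hC.exists_leftQuotient_leftQuotient_eq_empty
    have hlen₁ : ∀ w ∈ C.leftQuotient b, w.length = n + 1 :=
      fun _ => length_of_mem_leftQuotient hlen
    have hb_card : (C.leftQuotient b).card ≤ Nat.fib (n + 2) := by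
      calc (C.leftQuotient b).card
          ≤ ((C.leftQuotient b).leftQuotient b).card +
              ((C.leftQuotient b).leftQuotient !b).card :=
            card_le_card_leftQuotient_add_card_leftQuotient hlen₁ b
        _ = ((C.leftQuotient b).leftQuotient !b).card := by rw [hb, card_empty, zero_add]
        _ ≤ Nat.fib (n + 2) := ih n (by omega) ((hC.leftQuotient b).leftQuotient !b)
            fun _ => length_of_mem_leftQuotient hlen₁
    have hnb_card : (C.leftQuotient !b).card ≤ Nat.fib (n + 3) :=
      ih (n + 1) (by omega) (hC.leftQuotient !b) fun _ => length_of_mem_leftQuotient hlen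
    calc C.card ≤ (C.leftQuotient b).card + (C.leftQuotient !b).card :=
          card_le_card_leftQuotient_add_card_leftQuotient hlen b
      _ ≤ Nat.fib (n + 2) + Nat.fib (n + 3) := add_le_add hb_card hnb_card
      _ = Nat.fib (n + 4) := Nat.fib_add_two.symm

lemma AvoidsCode.card_le_fib {n : ℕ} {C : Finset (List Bool)} (hC : AvoidsCode {[0, 1, 1]} C)
    (hlen : ∀ u ∈ C, u.length = n) : C.card ≤ Nat.fib (n + 3) := by
  match n, hlen with
  | 0, hlen => exact (card_le_two_pow hlen).trans (by decide)
  | n + 1, hlen =>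
    have hquot (b : Bool) : (C.leftQuotient b).card ≤ Nat.fib (n + 2) :=
      (hC.avoidsAfterZero_leftQuotient b).card_le_fib fun _ => length_of_mem_leftQuotient hlen
    calc C.card ≤ (C.leftQuotient false).card + (C.leftQuotient true).card :=
          card_le_card_leftQuotient_add_card_leftQuotient hlen false
      _ ≤ Nat.fib (n + 2) + Nat.fib (n + 3) :=
          add_le_add (hquot false) ((hquot true).trans (Nat.fib_mono (by omega)))
      _ = Nat.fib (n + 4) := Nat.fib_add_two.symm

def noAdjacentOnes : ℕ → Finset (List Bool)
  | 0 => {[]}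
  | 1 => {[false], [true]}
  | n + 2 => (noAdjacentOnes (n + 1)).image (false :: ·) ∪
      (noAdjacentOnes n).image (true :: false :: ·)

lemma length_of_mem_noAdjacentOnes : ∀ {n : ℕ}, ∀ u ∈ noAdjacentOnes n, u.length = n
  | 0, u, hu => by simp_all [noAdjacentOnes]
  | 1, u, hu => by
    rcases (by simpa [noAdjacentOnes] using hu : u = [false] ∨ u = [true]) with rfl | rfl <;> rfl
  | n + 2, u, hu => by
    simp only [noAdjacentOnes, mem_union, mem_image] at hu
    rcases hu with ⟨w, hw, rfl⟩ | ⟨w, hw, rfl⟩ <;> simp [length_of_mem_noAdjacentOnes w hw]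

lemma card_noAdjacentOnes : ∀ n, (noAdjacentOnes n).card = Nat.fib (n + 2)
  | 0 => rfl
  | 1 => rfl
  | n + 2 => by
    have hdisj : Disjoint ((noAdjacentOnes (n + 1)).image (false :: ·))
        ((noAdjacentOnes n).image (true :: false :: ·)) := by
      simp [disjoint_left]
    rw [noAdjacentOnes, card_union_of_disjoint hdisj, card_image_of_injective _ List.cons_injective,
      card_image_of_injective _ fun _ _ h => by simpa using h, card_noAdjacentOnes (n + 1),
      card_noAdjacentOnes n, add_comm]
    exact Nat.fib_add_two.symm

lemma not_infix_of_mem_noAdjacentOnes :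
    ∀ {n : ℕ}, ∀ u ∈ noAdjacentOnes n, ¬ [true, true] <:+: u
  | 0, u, hu => by simp_all [noAdjacentOnes]
  | 1, u, hu => fun h => by simpa [length_of_mem_noAdjacentOnes u hu] using h.length_le
  | n + 2, u, hu => by
    simp only [noAdjacentOnes, mem_union, mem_image] at hu
    rcases hu with ⟨w, hw, rfl⟩ | ⟨w, hw, rfl⟩
    · simpa [List.infix_cons_iff] using not_infix_of_mem_noAdjacentOnes w hw
    · simpa [List.infix_cons_iff] using not_infix_of_mem_noAdjacentOnes w hw

lemma infix_of_infix_diffWord : ∀ {u v : List Bool},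
    [(1 : ℤ), 1] <:+: diffWord u v → [true, true] <:+: u
  | a :: a' :: u, b :: b' :: v, h => by
    rw [diffWord_cons, List.infix_cons_iff] at h
    rcases h with h | h
    · have hprefix : [true, true] <+: a :: a' :: u := by
        rw [diffWord_cons] at h
        cases a <;> cases b <;> cases a' <;> cases b' <;> simp_all [boolToInt]
      exact hprefix.isInfix
    · exact (infix_of_infix_diffWord h).trans (List.infix_cons (List.infix_refl _))
  | [], _, h | [_], _, h | _, [], h | _, [_], h => by simpa [diffWord] using h.length_le

lemma avoidsCode_noAdjacentOnes (n : ℕ) : AvoidsCode {[0, 1, 1]} (noAdjacentOnes n) := by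
  intro u hu v _ _ p hp hinfix
  rw [mem_singleton] at hp
  subst hp
  exact not_infix_of_mem_noAdjacentOnes u hu
    (infix_of_infix_diffWord ((List.suffix_cons _ _).isInfix.trans hinfix))

lemma card_le_delta {D : Finset (List ℤ)} {n : ℕ} {C : Finset (List Bool)}
    (hlen : ∀ u ∈ C, u.length = n) (hC : AvoidsCode D C) : C.card ≤ delta D n :=
  le_csSup ⟨2 ^ n, by rintro _ ⟨C', hlen', -, rfl⟩; exact card_le_two_pow hlen'⟩
    ⟨C, hlen, hC, rfl⟩

lemma delta_le {D : Finset (List ℤ)} {n N : ℕ}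
    (h : ∀ C : Finset (List Bool), (∀ u ∈ C, u.length = n) → AvoidsCode D C →
      C.card ≤ N) :
    delta D n ≤ N :=
  csSup_le ⟨0, ∅, by simp, by simp [AvoidsCode], rfl⟩
    fun _ ⟨C, hlen, hC, hk⟩ => hk ▸ h C hlen hC

lemma fib_le_delta (n : ℕ) : Nat.fib (n + 2) ≤ delta {[0, 1, 1]} n :=
  card_noAdjacentOnes n ▸ card_le_delta (fun _ => length_of_mem_noAdjacentOnes _)
    (avoidsCode_noAdjacentOnes n)

lemma delta_le_fib (n : ℕ) : delta {[0, 1, 1]} n ≤ Nat.fib (n + 3) :=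
  delta_le fun _ hlen hC => hC.card_le_fib hlen

-- Both bounds come from `fib (n + 1) - ψ * fib n = φ ^ n` and `-1 < ψ < 0`.
lemma fib_succ_le_goldenRatio_pow (n : ℕ) : (Nat.fib (n + 1) : ℝ) ≤ φ ^ n := by
  have := fib_succ_sub_goldenConj_mul_fib n
  nlinarith [goldenConj_neg, (Nat.cast_nonneg (Nat.fib n) : (0 : ℝ) ≤ _)]

lemma goldenRatio_pow_le_fib_add_two (n : ℕ) : φ ^ n ≤ Nat.fib (n + 2) := by
  have := fib_succ_sub_goldenConj_mul_fib n
  rw [Nat.fib_add_two, Nat.cast_add]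
  nlinarith [neg_one_lt_goldenConj, (Nat.cast_nonneg (Nat.fib n) : (0 : ℝ) ≤ _)]

lemma tendsto_logb_div_of_pow_le_of_le_mul_pow {b r c : ℝ} {x : ℕ → ℝ} (hb : 1 < b)
    (hr : 0 < r) (hlow : ∀ n, r ^ n ≤ x n) (hup : ∀ n, x n ≤ c * r ^ n) :
    Tendsto (fun n : ℕ => logb b (x n) / n) atTop (𝓝 (logb b r)) := by
  have hc : 0 < c := by simpa using (zero_lt_one.trans_le (by simpa using hlow 0)).trans_le (hup 0)
  have hupper : Tendsto (fun n : ℕ => logb b c / n + logb b r) atTop (𝓝 (logb b r)) := by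
    simpa using (tendsto_const_div_atTop_nhds_zero_nat (logb b c)).add_const (logb b r)
  refine tendsto_of_tendsto_of_tendsto_of_le_of_le' tendsto_const_nhds hupper ?_ ?_ <;>
    filter_upwards [eventually_gt_atTop 0] with n hn
  all_goals
    have hrn : 0 < r ^ n := pow_pos hr n
    have hn' : (0 : ℝ) < n := by exact_mod_cast hn
  · rw [le_div_iff₀ hn', mul_comm, ← logb_pow]
    exact logb_le_logb_of_le hb hrn (hlow n)
  · rw [div_add' _ _ _ hn'.ne', div_le_div_iff_of_pos_right hn', mul_comm, ← logb_pow,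
      ← logb_mul hc.ne' hrn.ne']
    exact logb_le_logb_of_le hb (hrn.trans_le (hlow n)) (hup n)

/-- `cap({0++}) = log₂((√5 + 1)/2)`. -/
theorem capacity_zero_plus_plus :
    cap {[(0:ℤ), 1, 1]} = Real.logb 2 ((Real.sqrt 5 + 1) / 2) := by
  rw [cap, add_comm]
  refine Tendsto.limsup_eq (tendsto_logb_div_of_pow_le_of_le_mul_pow one_lt_two goldenRatio_pos
    (c := φ ^ 2) (fun n => ?_) (fun n => ?_))
  · exact (goldenRatio_pow_le_fib_add_two n).trans (by exact_mod_cast fib_le_delta n)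
  · calc (delta {[0, 1, 1]} n : ℝ) ≤ Nat.fib (n + 2 + 1) := by exact_mod_cast delta_le_fib n
      _ ≤ φ ^ (n + 2) := fib_succ_le_goldenRatio_pow (n + 2)
      _ = φ ^ 2 * φ ^ n := by ring
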